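/- The generating function F_p(x) for friendly p-watermelons (p walkers from the origin to a common endpoint, non-crossing, such that all p walkers never simultaneously occupy the same vertex except at the two endpoints, and never do all p walkers share an edge) satisfies F_p(x) = 2(1-x) - 1/V_p(x), where V_p(x) is the generating function for vicious p-watermelons. -/

import Mathlib

/-- A directed walk of length `n`, encoded by its ordinates, frozen after time `n`. -/
def IsWalkTo (n : ℕ) (y : ℕ → ℤ) : Prop :=
  (∀ t < n, y (t + 1) = y t + 1 ∨ y (t + 1) = y t - 1) ∧ (∀ t, n ≤ t → y t = y n)

/-- A vicious `p`-watermelon of length `n`: walks start at heights `0,2,…,2(p-1)`,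
end at heights `c, c+2, …, c+2(p-1)` for some `c`, with strict ordering at every time. -/
def Vicious (p n : ℕ) (y : Fin p → ℕ → ℤ) : Prop :=
  (∀ k, IsWalkTo n (y k)) ∧
  (∀ k : Fin p, y k 0 = 2 * ((k : ℕ) : ℤ)) ∧
  (∃ c : ℤ, ∀ k : Fin p, y k n = c + 2 * ((k : ℕ) : ℤ)) ∧
  (∀ t ≤ n, ∀ j k : Fin p, j < k → y j t < y k t)

/-- A super friendly `p`-watermelon of length `n`: all walks start at the origin,
all end at the same point, with weak ordering at every time. -/
def SuperFriendly (p n : ℕ) (y : Fin p → ℕ → ℤ) : Prop :=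
  (∀ k, IsWalkTo n (y k)) ∧
  (∀ k, y k 0 = 0) ∧
  (∀ j k : Fin p, y j n = y k n) ∧
  (∀ t ≤ n, ∀ j k : Fin p, j ≤ k → y j t ≤ y k t)

/-- All `p` walkers coincide at time `t`. -/
def AllCoincide (p : ℕ) (y : Fin p → ℕ → ℤ) (t : ℕ) : Prop :=
  ∀ j k : Fin p, y j t = y k t

/-- A friendly `p`-watermelon: walkers from the origin to a common endpoint,
non-crossing, never all on the same vertex except at the endpoints, and never
all sharing an edge (i.e. never all coinciding at two consecutive times `t, t+1`
with `t < n`). -/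
def FriendlyWM (p n : ℕ) (y : Fin p → ℕ → ℤ) : Prop :=
  SuperFriendly p n y ∧
  (∀ t, 0 < t → t < n → ¬ AllCoincide p y t) ∧
  (∀ t < n, ¬ (AllCoincide p y t ∧ AllCoincide p y (t + 1)))

/-!
All walkers of a watermelon have the parity of the time, so strictly ordered walkers are at least
two apart; lowering the `k`-th walker by `2k` is therefore a bijection from vicious watermelons
onto super friendly ones (weakly ordered, common start and end), and `V = S`. Cutting a super
friendly watermelon at the first positive time where all walkers meet splits it into an
irreducible one (no meeting strictly inside) and an arbitrary one, whence `S = 1 + (I - 1) S`.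
Irreducible watermelons of length `≠ 1` are exactly the friendly ones, while there are two of
length one (all walkers step up, or all down) and no friendly one; so `F = I - 2x` and
`I - 1 = 1 - 1/S` give `F = 2(1 - x) - 1/V`.
-/

open Finset PowerSeries

theorem IsWalkTo.even_sub {n : ℕ} {y : ℕ → ℤ} (h : IsWalkTo n y) {t : ℕ} (ht : t ≤ n) :
    Even (y t - y 0 - t) := by
  induction t with
  | zero => simp
  | succ t ih =>
    obtain ⟨u, hu⟩ := ih (by omega)
    rcases h.1 t (by omega) with h1 | h1
    · exact ⟨u, by push_cast; omega⟩
    · exact ⟨u - 1, by push_cast; omega⟩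

theorem IsWalkTo.eq_of_step_iff {n : ℕ} {y z : ℕ → ℤ} (hy : IsWalkTo n y) (hz : IsWalkTo n z)
    (h0 : y 0 = z 0) (hs : ∀ t < n, (y (t + 1) = y t + 1 ↔ z (t + 1) = z t + 1)) : y = z := by
  have hle : ∀ t ≤ n, y t = z t := by
    intro t ht
    induction t with
    | zero => exact h0
    | succ t ih =>
      have := ih (by omega)
      have := hs t (by omega)
      rcases hy.1 t (by omega) with h1 | h1 <;> rcases hz.1 t (by omega) with h2 | h2 <;> omega
  funext t
  rcases le_total t n with ht | ht
  · exact hle t ht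
  · rw [hy.2 t ht, hz.2 t ht, hle n le_rfl]

theorem isWalkTo_add_const_iff {n : ℕ} {y : ℕ → ℤ} (c : ℤ) :
    IsWalkTo n (fun t => y t + c) ↔ IsWalkTo n y := by
  simp only [IsWalkTo, add_left_inj, add_right_comm _ c, add_sub_right_comm _ c]

theorem IsWalkTo.truncate {n r : ℕ} {y : ℕ → ℤ} (h : IsWalkTo n y) (hr : r ≤ n) :
    IsWalkTo r fun t => y (min t r) := by
  refine ⟨fun t ht => ?_, fun t ht => by simp [min_eq_right ht]⟩
  simpa [min_eq_left ht.le, min_eq_left (Nat.succ_le_of_lt ht)] using h.1 t (by omega)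

theorem IsWalkTo.drop {n r : ℕ} {y : ℕ → ℤ} (h : IsWalkTo n y) (hr : r ≤ n) :
    IsWalkTo (n - r) fun t => y (r + t) - y r := by
  refine ⟨fun t ht => ?_, fun t ht => ?_⟩
  · rcases h.1 (r + t) (by omega) with h1 | h1 <;> simp only [← add_assoc, h1] <;> omega
  · simp only [h.2 (r + t) (by omega), Nat.add_sub_cancel' hr]

def appendAt (r : ℕ) (z w : ℕ → ℤ) : ℕ → ℤ :=
  fun t => if t ≤ r then z t else z r + w (t - r)

theorem appendAt_of_le {r t : ℕ} {z w : ℕ → ℤ} (ht : t ≤ r) : appendAt r z w t = z t :=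
  if_pos ht

theorem appendAt_of_ge {r t : ℕ} {z w : ℕ → ℤ} (hw : w 0 = 0) (ht : r ≤ t) :
    appendAt r z w t = z r + w (t - r) := by
  rcases ht.eq_or_lt with rfl | ht
  · simp [appendAt, hw]
  · exact if_neg (by omega)

theorem IsWalkTo.append {r m : ℕ} {z w : ℕ → ℤ} (hz : IsWalkTo r z) (hw : IsWalkTo m w)
    (hw0 : w 0 = 0) : IsWalkTo (r + m) (appendAt r z w) := by
  refine ⟨fun t ht => ?_, fun t ht => ?_⟩
  · by_cases htr : t < r
    · rw [appendAt_of_le htr, appendAt_of_le htr.le]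
      exact hz.1 t htr
    · rw [appendAt_of_ge hw0 (by omega), appendAt_of_ge hw0 (by omega),
        show t + 1 - r = t - r + 1 by omega]
      rcases hw.1 (t - r) (by omega) with h1 | h1 <;> simp only [h1] <;> omega
  · rw [appendAt_of_ge hw0 (by omega), appendAt_of_ge hw0 (by omega), Nat.add_sub_cancel_left,
      hw.2 _ (by omega)]

instance (p n : ℕ) : Finite {y : Fin p → ℕ → ℤ // SuperFriendly p n y} :=
  Finite.of_injective (fun y k (t : Fin n) => decide (y.1 k (t + 1) = y.1 k t + 1)) fun y z h =>
    Subtype.ext <| funext fun k =>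
      IsWalkTo.eq_of_step_iff (y.2.1 k) (z.2.1 k) (by rw [y.2.2.1, z.2.2.1]) fun t ht => by
        simpa using congrFun (congrFun h k) ⟨t, ht⟩

theorem Monotone.of_strictMono_add_two_mul {p : ℕ} {f : Fin p → ℤ}
    (hf : StrictMono fun k => f k + 2 * ((k : ℕ) : ℤ)) (heven : ∀ j k, Even (f k - f j)) :
    Monotone f := by
  cases p with
  | zero => exact fun j => j.elim0
  | succ p =>
    refine Fin.monotone_iff_le_succ.2 fun i => ?_
    have hlt := hf (Fin.castSucc_lt_succ (i := i))
    obtain ⟨u, hu⟩ := heven i.castSucc i.succ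
    simp only [Fin.val_castSucc, Fin.val_succ, Nat.cast_add, Nat.cast_one] at hlt
    omega

theorem superFriendly_iff_vicious_add {p n : ℕ} {y : Fin p → ℕ → ℤ} :
    SuperFriendly p n y ↔ Vicious p n (y + fun (k : Fin p) (_ : ℕ) => 2 * ((k : ℕ) : ℤ)) := by
  have hwalk : ∀ k, IsWalkTo n (y k + fun _ => 2 * ((k : ℕ) : ℤ)) ↔ IsWalkTo n (y k) :=
    fun k => isWalkTo_add_const_iff _
  simp only [SuperFriendly, Vicious, hwalk, Pi.add_apply, add_eq_right, add_left_inj]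
  refine and_congr_right fun hw => and_congr_right fun h0 => and_congr ?_ ?_
  · refine ⟨fun h => ?_, fun ⟨c, hc⟩ j k => by rw [hc j, hc k]⟩
    rcases isEmpty_or_nonempty (Fin p) with _ | ⟨⟨k₀⟩⟩
    · exact ⟨0, isEmptyElim⟩
    · exact ⟨y k₀ n, fun k => h k k₀⟩
  · refine forall₂_congr fun t ht => ⟨fun hmono j k hjk => ?_, fun hstrict => ?_⟩
    · have := hmono j k hjk.le
      have : (j : ℕ) < k := hjk
      omega
    · refine Monotone.of_strictMono_add_two_mul hstrict fun j k => ?_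
      have hj := (hw j).even_sub ht
      have hk := (hw k).even_sub ht
      rw [h0] at hj hk
      simpa using hk.sub hj

theorem card_vicious_eq_card_superFriendly (p n : ℕ) :
    Nat.card {y : Fin p → ℕ → ℤ // Vicious p n y} =
      Nat.card {y : Fin p → ℕ → ℤ // SuperFriendly p n y} :=
  (Nat.card_congr ((Equiv.addRight _).subtypeEquiv fun _ => superFriendly_iff_vicious_add)).symm

def IrreducibleSF (p n : ℕ) (y : Fin p → ℕ → ℤ) : Prop :=
  SuperFriendly p n y ∧ ∀ t, 0 < t → t < n → ¬ AllCoincide p y t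

section FirstReturn

variable {p : ℕ}

noncomputable def firstReturn (y : Fin p → ℕ → ℤ) : ℕ :=
  sInf {t | 0 < t ∧ AllCoincide p y t}

theorem firstReturn_eq {y : Fin p → ℕ → ℤ} {r : ℕ} (hr : 0 < r) (hco : AllCoincide p y r)
    (hmin : ∀ t, 0 < t → t < r → ¬ AllCoincide p y t) : firstReturn y = r :=
  le_antisymm (Nat.sInf_le ⟨hr, hco⟩) <|
    le_csInf ⟨r, hr, hco⟩ fun t ⟨ht, hc⟩ => not_lt.1 fun hlt => hmin t ht hlt hc

theorem SuperFriendly.firstReturn_spec {n : ℕ} {y : Fin p → ℕ → ℤ} (h : SuperFriendly p n y)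
    (hn : 0 < n) :
    0 < firstReturn y ∧ firstReturn y ≤ n ∧ AllCoincide p y (firstReturn y) ∧
      ∀ t, 0 < t → t < firstReturn y → ¬ AllCoincide p y t := by
  have hmem : n ∈ {t | 0 < t ∧ AllCoincide p y t} := ⟨hn, h.2.2.1⟩
  obtain ⟨hpos, hco⟩ := Nat.sInf_mem ⟨n, hmem⟩
  exact ⟨hpos, Nat.sInf_le hmem, hco, fun t ht hlt hc => Nat.notMem_of_lt_sInf hlt ⟨ht, hc⟩⟩

theorem SuperFriendly.irreducibleSF_truncate {n r : ℕ} {y : Fin p → ℕ → ℤ}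
    (h : SuperFriendly p n y) (hrn : r ≤ n) (hco : AllCoincide p y r)
    (hmin : ∀ t, 0 < t → t < r → ¬ AllCoincide p y t) :
    IrreducibleSF p r fun k t => y k (min t r) := by
  refine ⟨⟨fun k => (h.1 k).truncate hrn, fun k => ?_, fun j k => ?_,
    fun t ht j k hjk => h.2.2.2 _ (by omega) j k hjk⟩, fun t ht htr hc => hmin t ht htr ?_⟩
  · simpa using h.2.1 k
  · simpa using hco j k
  · exact fun j k => by simpa [min_eq_left htr.le] using hc j k

theorem SuperFriendly.drop {n r : ℕ} {y : Fin p → ℕ → ℤ} (h : SuperFriendly p n y)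
    (hrn : r ≤ n) (hco : AllCoincide p y r) :
    SuperFriendly p (n - r) fun k t => y k (r + t) - y k r := by
  refine ⟨fun k => (h.1 k).drop hrn, fun k => by simp, fun j k => ?_, fun t ht j k hjk => ?_⟩
  · simp only [Nat.add_sub_cancel' hrn, h.2.2.1 j k, hco j k]
  · have := h.2.2.2 (r + t) (by omega) j k hjk
    have := hco j k
    dsimp only
    omega

def glueAt (r : ℕ) (z w : Fin p → ℕ → ℤ) : Fin p → ℕ → ℤ :=
  fun k => appendAt r (z k) (w k)

theorem SuperFriendly.glue {r m : ℕ} {z w : Fin p → ℕ → ℤ} (hz : SuperFriendly p r z)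
    (hw : SuperFriendly p m w) : SuperFriendly p (r + m) (glueAt r z w) := by
  refine ⟨fun k => (hz.1 k).append (hw.1 k) (hw.2.1 k), fun k => ?_, fun j k => ?_,
    fun t ht j k hjk => ?_⟩
  · simp only [glueAt, appendAt_of_le (Nat.zero_le r), hz.2.1 k]
  · simp only [glueAt, appendAt_of_ge (hw.2.1 _) (Nat.le_add_right r m),
      Nat.add_sub_cancel_left, hz.2.2.1 j k, hw.2.2.1 j k]
  · by_cases htr : t ≤ r
    · simp only [glueAt, appendAt_of_le htr]
      exact hz.2.2.2 t htr j k hjk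
    · simp only [glueAt, appendAt_of_ge (hw.2.1 _) (not_le.1 htr).le]
      have := hz.2.2.2 r le_rfl j k hjk
      have := hw.2.2.2 (t - r) (by omega) j k hjk
      omega

theorem IrreducibleSF.firstReturn_glueAt {r : ℕ} {z w : Fin p → ℕ → ℤ}
    (hz : IrreducibleSF p r z) (hr : 0 < r) : firstReturn (glueAt r z w) = r := by
  refine firstReturn_eq hr (fun j k => ?_) fun t ht htr hc => hz.2 t ht htr fun j k => ?_
  · simpa only [glueAt, appendAt_of_le le_rfl] using hz.1.2.2.1 j k
  · simpa only [glueAt, appendAt_of_le htr.le] using hc j k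

noncomputable def firstReturnEquiv {n r : ℕ} (hr : 0 < r) (hrn : r ≤ n) :
    {y : {y : Fin p → ℕ → ℤ // SuperFriendly p n y} // firstReturn y.1 = r} ≃
      {z : Fin p → ℕ → ℤ // IrreducibleSF p r z} ×
        {w : Fin p → ℕ → ℤ // SuperFriendly p (n - r) w} where
  toFun y :=
    ⟨⟨fun k t => y.1.1 k (min t r), by
        obtain ⟨-, hrn, hco, hmin⟩ := y.1.2.firstReturn_spec (by omega)
        rw [y.2] at hrn hco hmin
        exact y.1.2.irreducibleSF_truncate hrn hco hmin⟩,
      ⟨fun k t => y.1.1 k (r + t) - y.1.1 k r, by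
        obtain ⟨-, hrn, hco, -⟩ := y.1.2.firstReturn_spec (by omega)
        rw [y.2] at hrn hco
        exact y.1.2.drop hrn hco⟩⟩
  invFun zw :=
    ⟨⟨glueAt r zw.1.1 zw.2.1, by
      simpa only [Nat.add_sub_cancel' hrn] using zw.1.2.1.glue zw.2.2⟩,
      zw.1.2.firstReturn_glueAt hr⟩
  left_inv y := by
    refine Subtype.ext <| Subtype.ext <| funext fun k => funext fun t => ?_
    by_cases htr : t ≤ r
    · simp [glueAt, appendAt_of_le htr, min_eq_left htr]
    · simp [glueAt, appendAt, htr, Nat.add_sub_cancel' (not_le.1 htr).le]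
  right_inv := by
    rintro ⟨⟨z, hz⟩, ⟨w, hw⟩⟩
    refine Prod.ext (Subtype.ext <| funext fun k => funext fun t => ?_)
      (Subtype.ext <| funext fun k => funext fun t => ?_)
    · rcases le_total t r with htr | htr
      · simp [glueAt, appendAt_of_le htr, min_eq_left htr]
      · simp [glueAt, appendAt_of_le, min_eq_right htr, (hz.1.1 k).2 t htr]
    · simp [glueAt, appendAt_of_ge (hw.2.1 k), hw.2.1 k]

theorem card_superFriendly_succ (n : ℕ) :
    Nat.card {y : Fin p → ℕ → ℤ // SuperFriendly p (n + 1) y} =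
      ∑ q ∈ antidiagonal n, Nat.card {z : Fin p → ℕ → ℤ // IrreducibleSF p (q.1 + 1) z} *
        Nat.card {w : Fin p → ℕ → ℤ // SuperFriendly p q.2 w} := by
  let f : {y : Fin p → ℕ → ℤ // SuperFriendly p (n + 1) y} → Fin (n + 1) := fun y =>
    ⟨firstReturn y.1 - 1, by have := y.2.firstReturn_spec n.succ_pos; omega⟩
  rw [← Nat.card_congr (Equiv.sigmaFiberEquiv f), Nat.card_sigma,
    Nat.sum_antidiagonal_eq_sum_range_succ_mk, ← Fin.sum_univ_eq_sum_range]
  refine Fintype.sum_congr _ _ fun k => ?_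
  have hfiber : ∀ y, f y = k ↔ firstReturn y.1 = k + 1 := fun y => by
    have := y.2.firstReturn_spec n.succ_pos
    simp only [f, Fin.ext_iff]
    omega
  rw [Nat.card_congr ((Equiv.subtypeEquivRight hfiber).trans
    (firstReturnEquiv k.val.succ_pos (by omega))), Nat.card_prod, Nat.add_sub_add_right]

end FirstReturn

theorem superFriendly_zero_iff {p : ℕ} {y : Fin p → ℕ → ℤ} : SuperFriendly p 0 y ↔ y = 0 := by
  refine ⟨fun h => funext fun k => funext fun t => ?_, ?_⟩
  · rw [(h.1 k).2 t t.zero_le, h.2.1 k, Pi.zero_apply, Pi.zero_apply]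
  · rintro rfl
    exact ⟨fun _ => ⟨fun t ht => absurd ht t.not_lt_zero, fun _ _ => rfl⟩, fun _ => rfl,
      fun _ _ => rfl, fun _ _ _ _ _ => le_rfl⟩

theorem card_superFriendly_zero (p : ℕ) :
    Nat.card {y : Fin p → ℕ → ℤ // SuperFriendly p 0 y} = 1 := by
  simp [superFriendly_zero_iff]

theorem irreducibleSF_iff_of_le_one {p n : ℕ} {y : Fin p → ℕ → ℤ} (hn : n ≤ 1) :
    IrreducibleSF p n y ↔ SuperFriendly p n y :=
  and_iff_left fun _ _ _ => by omega

theorem friendlyWM_iff_irreducibleSF {p n : ℕ} {y : Fin p → ℕ → ℤ} (hn : n ≠ 1) :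
    FriendlyWM p n y ↔ IrreducibleSF p n y := by
  refine ⟨fun h => ⟨h.1, h.2.1⟩, fun h => ⟨h.1, h.2, fun t ht hc => ?_⟩⟩
  rcases t.eq_zero_or_pos with rfl | ht0
  · exact h.2 1 one_pos (by omega) hc.2
  · exact h.2 t ht0 ht hc.1

theorem card_friendlyWM_one (p : ℕ) :
    Nat.card {y : Fin p → ℕ → ℤ // FriendlyWM p 1 y} = 0 := by
  have : IsEmpty {y : Fin p → ℕ → ℤ // FriendlyWM p 1 y} :=
    ⟨fun ⟨y, h⟩ => h.2.2 0 one_pos ⟨fun j k => by rw [h.1.2.1 j, h.1.2.1 k], h.1.2.2.1⟩⟩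
  exact Nat.card_of_isEmpty

def superFriendlyOneEquiv {p : ℕ} (hp : 0 < p) :
    {y : Fin p → ℕ → ℤ // SuperFriendly p 1 y} ≃ Bool where
  toFun y := decide (y.1 ⟨0, hp⟩ 1 = 1)
  invFun b := ⟨fun _ t => if t = 0 then 0 else if b then 1 else -1, by
    refine ⟨fun _ => ⟨fun t ht => ?_, fun t ht => ?_⟩, fun _ => rfl, fun _ _ => rfl,
      fun _ _ _ _ _ => le_rfl⟩
    · obtain rfl : t = 0 := by omega
      cases b <;> simp
    · simp [show t ≠ 0 by omega]⟩
  left_inv := by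
    rintro ⟨y, hw, h0, hend, -⟩
    refine Subtype.ext <| funext fun k => funext fun t => ?_
    have hstep := (hw ⟨0, hp⟩).1 0 one_pos
    rw [h0] at hstep
    rcases t.eq_zero_or_pos with rfl | ht
    · simp [h0 k]
    · change (if t = 0 then 0 else if decide (y ⟨0, hp⟩ 1 = 1) then 1 else -1) = y k t
      rw [if_neg ht.ne', (hw k).2 t ht, hend k ⟨0, hp⟩]
      rcases hstep with h | h <;> simp [h]
  right_inv b := by cases b <;> simp

theorem card_irreducibleSF_eq {p : ℕ} (hp : 0 < p) (n : ℕ) :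
    Nat.card {y : Fin p → ℕ → ℤ // IrreducibleSF p n y} =
      Nat.card {y : Fin p → ℕ → ℤ // FriendlyWM p n y} + if n = 1 then 2 else 0 := by
  by_cases hn : n = 1
  · subst hn
    rw [card_friendlyWM_one, Nat.card_congr ((Equiv.subtypeEquivRight fun _ =>
      irreducibleSF_iff_of_le_one le_rfl).trans (superFriendlyOneEquiv hp))]
    simp
  · simp only [friendlyWM_iff_irreducibleSF hn, hn, if_false, add_zero]

theorem PowerSeries.one_sub_mul_eq_one_of_coeff_succ {R : Type*} [CommRing R] {A S : R⟦X⟧}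
    (hA : constantCoeff A = 0) (hS₀ : constantCoeff S = 1)
    (hS : ∀ n, coeff (n + 1) S = ∑ q ∈ antidiagonal n, coeff (q.1 + 1) A * coeff q.2 S) :
    (1 - A) * S = 1 := by
  rw [sub_mul, one_mul, sub_eq_iff_eq_add']
  ext (_ | n)
  · simp [hS₀, hA]
  · simp [hS, coeff_mul, Nat.sum_antidiagonal_succ, hA]

/-- `F_p(x) = 2(1-x) - 1/V_p(x)` where `F_p` is the generating function for friendly
`p`-watermelons and `V_p` the generating function for vicious `p`-watermelons. -/
theorem friendly_genfun_eq (p : ℕ) (hp : 1 ≤ p) :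
    (PowerSeries.mk fun n => (Nat.card {y : Fin p → ℕ → ℤ // FriendlyWM p n y} : ℚ)) =
      2 * (1 - PowerSeries.X) -
        (PowerSeries.mk fun n => (Nat.card {y : Fin p → ℕ → ℤ // Vicious p n y} : ℚ))⁻¹ := by
  set S := mk fun n => (Nat.card {y : Fin p → ℕ → ℤ // SuperFriendly p n y} : ℚ)
  set I := mk fun n => (Nat.card {y : Fin p → ℕ → ℤ // IrreducibleSF p n y} : ℚ)
  have hV : (mk fun n => (Nat.card {y : Fin p → ℕ → ℤ // Vicious p n y} : ℚ)) = S := by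
    simp only [card_vicious_eq_card_superFriendly, S]
  have hF :
      (mk fun n => (Nat.card {y : Fin p → ℕ → ℤ // FriendlyWM p n y} : ℚ)) = I - 2 * X := by
    ext n
    simp only [I, coeff_mk, map_sub, two_mul, map_add, coeff_X, card_irreducibleSF_eq hp]
    split_ifs <;> push_cast <;> ring
  have hS₀ : constantCoeff S = 1 := by simp [S, card_superFriendly_zero]
  have hrenewal : (1 - (I - 1)) * S = 1 := one_sub_mul_eq_one_of_coeff_succ
    (by simp [I, irreducibleSF_iff_of_le_one, card_superFriendly_zero]) hS₀
    fun n => by simp [S, I, card_superFriendly_succ]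
  rw [hV, hF, (inv_eq_iff_mul_eq_one (by simp [hS₀])).2 hrenewal]
  ring
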